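/- arXiv:1103.2924 — 2 statements merged into one kernel-verified Lean document; each statement's English description precedes it below -/
import Mathlib

section
/- If every filterbase in X γ-R-accumulates to some point of X, then X is γ-closed: every cover of X by γ-open sets {V_α} has a finite subfamily with X = ⋃ cl_γ(V_{α_i}). -/
open Set TopologicalSpace

variable {X : Type*}

/-- `γ`-interior: points of `A` having an open nbd `N` with `γ(N) ⊆ A`. -/
def gInt [TopologicalSpace X] (g : Set X → Set X) (A : Set X) : Set X :=
  {x | x ∈ A ∧ ∃ N, IsOpen N ∧ x ∈ N ∧ g N ⊆ A}

/-- `γ`-closure. -/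
def gCl [TopologicalSpace X] (g : Set X → Set X) (A : Set X) : Set X :=
  {x | ∀ U, IsOpen U → x ∈ U → (g U ∩ A).Nonempty}

def GOpen [TopologicalSpace X] (g : Set X → Set X) (A : Set X) : Prop := A = gInt g A

def GClosed [TopologicalSpace X] (g : Set X → Set X) (A : Set X) : Prop := gCl g A ⊆ A

def GRegOpen [TopologicalSpace X] (g : Set X → Set X) (A : Set X) : Prop :=
  A = gInt g (gCl g A)

/-- `γ-θ`-closure. -/
def gThCl [TopologicalSpace X] (g : Set X → Set X) (A : Set X) : Set X :=
  {x | ∀ U, GOpen g U → x ∈ U → (gCl g U ∩ A).Nonempty}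

def GThClosed [TopologicalSpace X] (g : Set X → Set X) (A : Set X) : Prop := gThCl g A = A

def GThOpen [TopologicalSpace X] (g : Set X → Set X) (A : Set X) : Prop := GThClosed g Aᶜ

/-- The operation condition `V ⊆ γ(V)` for open `V`. -/
def IsGammaOp [TopologicalSpace X] (g : Set X → Set X) : Prop :=
  ∀ V, IsOpen V → V ⊆ g V

/-- `γ` is a regular operation. -/
def RegularOp [TopologicalSpace X] (g : Set X → Set X) : Prop :=
  ∀ U V (x : X), IsOpen U → IsOpen V → x ∈ U → x ∈ V →
    ∃ W, IsOpen W ∧ x ∈ W ∧ g W ⊆ g U ∩ g V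

/-- `γ` is an open operation. -/
def OpenOp [TopologicalSpace X] (g : Set X → Set X) : Prop :=
  ∀ U (x : X), IsOpen U → x ∈ U → ∃ B, GOpen g B ∧ x ∈ B ∧ B ⊆ g U

/-- `γ`-extremally disconnected space. -/
def GammaED [TopologicalSpace X] (g : Set X → Set X) : Prop :=
  ∀ U, GOpen g U → GOpen g (gCl g U)

/-- A filterbase. -/
def Filterbase (Γ : Set (Set X)) : Prop :=
  Γ.Nonempty ∧ (∀ F ∈ Γ, F.Nonempty) ∧
    ∀ F₁ ∈ Γ, ∀ F₂ ∈ Γ, ∃ F₃ ∈ Γ, F₃ ⊆ F₁ ∩ F₂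

/-- A maximal filterbase (ultrafilter-like characterization). -/
def MaxFilterbase (Γ : Set (Set X)) : Prop :=
  Filterbase Γ ∧ ∀ S : Set X, (∃ F ∈ Γ, F ⊆ S) ∨ (∃ F ∈ Γ, F ⊆ Sᶜ)

/-- `Γ` γ-R-converges to `x₀`. -/
def GRConv [TopologicalSpace X] (g : Set X → Set X) (Γ : Set (Set X)) (x₀ : X) : Prop :=
  ∀ A, GRegOpen g A → x₀ ∈ A → ∃ F ∈ Γ, F ⊆ A

/-- `Γ` γ-R-accumulates to `x₀`. -/
def GRAcc [TopologicalSpace X] (g : Set X → Set X) (Γ : Set (Set X)) (x₀ : X) : Prop :=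
  ∀ A, GRegOpen g A → x₀ ∈ A → ∀ F ∈ Γ, (F ∩ A).Nonempty

/-- `X` is a `γ`-closed space. -/
def GammaClosedSpace [TopologicalSpace X] (g : Set X → Set X) : Prop :=
  ∀ C : Set (Set X), (∀ V ∈ C, GOpen g V) → ⋃₀ C = univ →
    ∃ D ⊆ C, D.Finite ∧ (⋃ V ∈ D, gCl g V) = univ



section Aux
variable [TopologicalSpace X] {g : Set X → Set X} {S T : Set X}

lemma gInt_subset : gInt g S ⊆ S := fun _ hx => hx.1

lemma gInt_mono (h : S ⊆ T) : gInt g S ⊆ gInt g T := by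
  rintro x ⟨hx, N, hN, hxN, hgN⟩
  exact ⟨h hx, N, hN, hxN, hgN.trans h⟩

lemma subset_gCl (hg : IsGammaOp g) : S ⊆ gCl g S := by
  intro x hx U hU hxU
  exact ⟨x, hg U hU hxU, hx⟩

lemma gCl_mono (h : S ⊆ T) : gCl g S ⊆ gCl g T := by
  intro x hx U hU hxU
  obtain ⟨y, hy1, hy2⟩ := hx U hU hxU
  exact ⟨y, hy1, h hy2⟩

lemma gOpen_inter_gCl {B : Set X} (hB : GOpen g B) {x : X} (hx : x ∈ B)
    (hxc : x ∈ gCl g S) : (B ∩ S).Nonempty := by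
  obtain ⟨_, N, hN, hxN, hgN⟩ := hB ▸ hx
  obtain ⟨y, hy1, hy2⟩ := hxc N hN hxN
  exact ⟨y, hgN hy1, hy2⟩

lemma gCl_idem (hop : OpenOp g) : gCl g (gCl g S) ⊆ gCl g S := by
  intro x hx U hU hxU
  obtain ⟨B, hB, hxB, hBU⟩ := hop U x hU hxU
  obtain ⟨y, hyB, hyc⟩ := gOpen_inter_gCl hB hxB hx
  obtain ⟨z, hz1, hz2⟩ := gOpen_inter_gCl hB hyB hyc
  exact ⟨z, hBU hz1, hz2⟩

lemma gOpen_gInt (hop : OpenOp g) : GOpen g (gInt g S) := by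
  apply Set.Subset.antisymm _ gInt_subset
  rintro x ⟨hxS, N, hN, hxN, hgN⟩
  refine ⟨⟨hxS, N, hN, hxN, hgN⟩, ?_⟩
  obtain ⟨B, hB, hxB, hBU⟩ := hop N x hN hxN
  obtain ⟨_, M, hM, hxM, hgM⟩ := hB ▸ hxB
  exact ⟨M, hM, hxM, fun z hz => (hB ▸ gInt_mono (hBU.trans hgN) : B ⊆ gInt g S) (hgM hz)⟩

lemma gRegOpen_gInt_gCl (hg : IsGammaOp g) (hop : OpenOp g) {V : Set X}
    (hV : GOpen g V) : GRegOpen g (gInt g (gCl g V)) := by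
  apply Set.Subset.antisymm
  · have h1 : gInt g (gCl g V) ⊆ gCl g (gInt g (gCl g V)) := subset_gCl hg
    have h2 := gOpen_gInt (S := gCl g V) hop
    calc gInt g (gCl g V) = gInt g (gInt g (gCl g V)) := h2
      _ ⊆ gInt g (gCl g (gInt g (gCl g V))) := gInt_mono h1
  · have h1 : gCl g (gInt g (gCl g V)) ⊆ gCl g V :=
      (gCl_mono gInt_subset).trans (gCl_idem hop)
    exact gInt_mono h1

end Aux

theorem gamma_closed_of_filterbase_acc [TopologicalSpace X] (g : Set X → Set X)
    (hg : IsGammaOp g) (hop : OpenOp g)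
    (h : ∀ Γ : Set (Set X), Filterbase Γ → ∃ x : X, GRAcc g Γ x) :
    GammaClosedSpace g := by
  intro C hC hcov
  by_contra hno
  push_neg at hno
  set Γ : Set (Set X) := {F | ∃ D : Set (Set X), D ⊆ C ∧ D.Finite ∧ F = (⋃ V ∈ D, gCl g V)ᶜ}
    with hΓdef
  have hmem : ∀ F ∈ Γ, F.Nonempty := by
    rintro F ⟨D, hDC, hDfin, rfl⟩
    exact Set.nonempty_compl.mpr (hno D hDC hDfin)
  have hfb : Filterbase Γ := by
    refine ⟨⟨(⋃ V ∈ (∅ : Set (Set X)), gCl g V)ᶜ, ∅, empty_subset _, finite_empty, rfl⟩,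
      hmem, ?_⟩
    rintro F₁ ⟨D₁, hD₁C, hD₁f, rfl⟩ F₂ ⟨D₂, hD₂C, hD₂f, rfl⟩
    refine ⟨(⋃ V ∈ D₁ ∪ D₂, gCl g V)ᶜ,
      ⟨D₁ ∪ D₂, union_subset hD₁C hD₂C, hD₁f.union hD₂f, rfl⟩, ?_⟩
    rw [biUnion_union, compl_union]
  obtain ⟨x₀, hacc⟩ := h Γ hfb
  have hx₀ : x₀ ∈ ⋃₀ C := hcov ▸ mem_univ x₀
  obtain ⟨V, hVC, hx₀V⟩ := hx₀
  have hVopen := hC V hVC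
  have hreg := gRegOpen_gInt_gCl hg hop hVopen
  have hx₀A : x₀ ∈ gInt g (gCl g V) := by
    have h1 : V ⊆ gInt g (gCl g V) := by
      nth_rewrite 1 [hVopen]
      exact gInt_mono (subset_gCl hg)
    exact h1 hx₀V
  have hF : (gCl g V)ᶜ ∈ Γ := by
    refine ⟨{V}, singleton_subset_iff.mpr hVC, finite_singleton V, ?_⟩
    simp
  obtain ⟨y, hy1, hy2⟩ := hacc _ hreg hx₀A _ hF
  exact hy1 (gInt_subset hy2)
end

section
/- Let γ be open and X γ-extremally disconnected. Then for every subset A of X, γcl_θ(A) = ⋂{V : A ⊆ V and V is γ-θ-closed}. -/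
open Set TopologicalSpace

variable {X : Type*}

lemma my_subset_gCl [TopologicalSpace X] {g : Set X → Set X} (hg : IsGammaOp g)
    (S : Set X) : S ⊆ gCl g S := by
  intro x hx V hV hxV
  exact ⟨x, hg V hV hxV, hx⟩

lemma my_gCl_idem [TopologicalSpace X] {g : Set X → Set X} (hop : OpenOp g) (S : Set X) :
    gCl g (gCl g S) ⊆ gCl g S := by
  intro z hz U hU hzU
  obtain ⟨B, hB, hzB, hBU⟩ := hop U z hU hzU
  have hzI : z ∈ gInt g B := hB ▸ hzB
  obtain ⟨-, N, hN, hzN, hNB⟩ := hzI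
  obtain ⟨y, hyN, hyS⟩ := hz N hN hzN
  have hyI : y ∈ gInt g B := hB ▸ (hNB hyN)
  obtain ⟨-, M, hM, hyM, hMB⟩ := hyI
  obtain ⟨w, hwM, hwS⟩ := hyS M hM hyM
  exact ⟨w, hBU (hMB hwM), hwS⟩

lemma my_subset_gThCl [TopologicalSpace X] {g : Set X → Set X} (hg : IsGammaOp g)
    (S : Set X) : S ⊆ gThCl g S := by
  intro x hx U hU hxU
  exact ⟨x, my_subset_gCl hg U hxU, hx⟩

theorem gThCl_eq_sInter_gThClosed [TopologicalSpace X] (g : Set X → Set X)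
    (hg : IsGammaOp g) (hop : OpenOp g) (hED : GammaED g) (A : Set X) :
    gThCl g A = ⋂₀ {V : Set X | A ⊆ V ∧ GThClosed g V} := by
  apply Set.Subset.antisymm
  · intro x hx V hV
    obtain ⟨hAV, hVc⟩ := hV
    rw [← hVc]
    intro U hU hxU
    obtain ⟨w, hw1, hw2⟩ := hx U hU hxU
    exact ⟨w, hw1, hAV hw2⟩
  · apply Set.sInter_subset_of_mem
    refine ⟨my_subset_gThCl hg A, ?_⟩
    apply Set.Subset.antisymm
    · intro z hz U hU hzU
      have hzc : z ∈ gCl g U := my_subset_gCl hg U hzU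
      obtain ⟨y, hy1, hy2⟩ := hz (gCl g U) (hED U hU) hzc
      have hyU : y ∈ gCl g U := my_gCl_idem hop U hy1
      obtain ⟨w, hw1, hw2⟩ := hy2 (gCl g U) (hED U hU) hyU
      exact ⟨w, my_gCl_idem hop U hw1, hw2⟩
    · exact my_subset_gThCl hg _
end
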